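/- arXiv:math/0309030 — 3 statements merged into one kernel-verified Lean document; each statement's English description precedes it below -/
import Mathlib

section
/- The union of the six tetrahedra T_I, T_II, T_III, T_IV, T_V, T_VI equals the brick K; that is, T_I ∪ T_II ∪ T_III ∪ T_IV ∪ T_V ∪ T_VI = [0,a] × [0,b] × [0,c]. -/
/-!
The linear map `x ↦ ![a, b, c] * x` carries the unit cube onto the brick and each corner of the
unit cube to the corresponding corner of the brick, and it commutes with convex hulls; so it
suffices to treat `a = b = c = 1`. There, in coordinates `(s, t, u)`, the planes `u = s`
(through E, H, C, B) and `s + t = 1` (through F, H, B, D) cut the cube into the tetrahedra T_VI and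
T_I and two square pyramids, which the planes `u = s + t - 1` and `u = s + t` split into T_V, T_IV
and T_III, T_II. On each piece the barycentric coordinates with respect to its tetrahedron are
nonnegative. The other inclusion holds because the cube is convex.
-/

open Set

theorem Matrix.vec3_mul {α : Type*} [Mul α] (a₀ a₁ a₂ b₀ b₁ b₂ : α) :
    ![a₀, a₁, a₂] * ![b₀, b₁, b₂] = ![a₀ * b₀, a₁ * b₁, a₂ * b₂] := by
  ext i; fin_cases i <;> rfl

theorem Pi.image_mul_left_Icc_zero_one {ι : Type*} {v : ι → ℝ} (hv : 0 ≤ v) :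
    (v * ·) '' Icc 0 1 = Icc 0 v := by
  ext y
  constructor
  · rintro ⟨x, ⟨hx0, hx1⟩, rfl⟩
    exact ⟨mul_nonneg hv hx0, by simpa using mul_le_mul_of_nonneg_left hx1 hv⟩
  · rintro ⟨hy0, hyv⟩
    refine ⟨y / v, ⟨fun i => div_nonneg (hy0 i) (hv i),
      fun i => div_le_one_of_le₀ (hyv i) (hv i)⟩, funext fun i => ?_⟩
    exact mul_div_cancel_of_imp' fun h => le_antisymm (h ▸ hyv i) (hy0 i)

theorem mem_convexHull_four {V : Type*} [AddCommGroup V] [Module ℝ V] {p q r s x : V}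
    (α β γ δ : ℝ) (hα : 0 ≤ α) (hβ : 0 ≤ β) (hγ : 0 ≤ γ) (hδ : 0 ≤ δ)
    (hsum : α + β + γ + δ = 1) (hx : x = α • p + β • q + γ • r + δ • s) :
    x ∈ convexHull ℝ {p, q, r, s} := by
  have h := (convex_convexHull ℝ ({p, q, r, s} : Set V)).sum_mem (t := Finset.univ)
    (w := ![α, β, γ, δ]) (z := ![p, q, r, s]) (by simp [Fin.forall_fin_succ, *])
    (by simp [Fin.sum_univ_four, hsum]) fun i _ => subset_convexHull ℝ _ (by fin_cases i <;> simp)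
  simpa [Fin.sum_univ_four, hx] using h

theorem vec3_mem_convexHull_four {x₀ x₁ x₂ p₀ p₁ p₂ q₀ q₁ q₂ r₀ r₁ r₂ w₀ w₁ w₂ : ℝ}
    (α β γ δ : ℝ) (hα : 0 ≤ α) (hβ : 0 ≤ β) (hγ : 0 ≤ γ) (hδ : 0 ≤ δ)
    (hsum : α + β + γ + δ = 1) (h₀ : x₀ = α * p₀ + β * q₀ + γ * r₀ + δ * w₀)
    (h₁ : x₁ = α * p₁ + β * q₁ + γ * r₁ + δ * w₁) (h₂ : x₂ = α * p₂ + β * q₂ + γ * r₂ + δ * w₂) :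
    ![x₀, x₁, x₂] ∈ convexHull ℝ {![p₀, p₁, p₂], ![q₀, q₁, q₂], ![r₀, r₁, r₂], ![w₀, w₁, w₂]} :=
  mem_convexHull_four α β γ δ hα hβ hγ hδ hsum (by simp [h₀, h₁, h₂])

section SixTetrahedra

variable {V : Type*} [AddCommGroup V] [Module ℝ V]

def sixTetrahedra (E F B A H G C D : V) : Set V :=
  convexHull ℝ {H, B, C, D} ∪ convexHull ℝ {D, A, B, E} ∪
    convexHull ℝ {E, B, H, D} ∪ convexHull ℝ {F, C, B, H} ∪
    convexHull ℝ {H, G, F, C} ∪ convexHull ℝ {E, F, B, H}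

theorem LinearMap.image_sixTetrahedra {W : Type*} [AddCommGroup W] [Module ℝ W] (f : V →ₗ[ℝ] W)
    (E F B A H G C D : V) :
    f '' sixTetrahedra E F B A H G C D =
      sixTetrahedra (f E) (f F) (f B) (f A) (f H) (f G) (f C) (f D) := by
  simp only [sixTetrahedra, image_union, f.image_convexHull, image_insert_eq, image_singleton]

end SixTetrahedra

theorem sixTetrahedra_subset_unitCube :
    sixTetrahedra ![0, 0, 0] ![1, 0, 0] ![1, 0, 1] ![0, 0, 1] ![0, 1, 0] ![1, 1, 0]
      ![1, 1, 1] ![0, 1, 1] ⊆ Icc (0 : Fin 3 → ℝ) 1 := by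
  simp only [sixTetrahedra, union_subset_iff, (convex_Icc _ _).convexHull_subset_iff,
    insert_subset_iff, singleton_subset_iff]
  simp [Pi.le_def, Fin.forall_fin_succ]

theorem vec3_mem_sixTetrahedra_unitCube {s t u : ℝ} (hs0 : 0 ≤ s) (hs1 : s ≤ 1) (ht0 : 0 ≤ t)
    (ht1 : t ≤ 1) (hu0 : 0 ≤ u) (hu1 : u ≤ 1) :
    ![s, t, u] ∈ sixTetrahedra ![0, 0, 0] ![1, 0, 0] ![1, 0, 1] ![0, 0, 1] ![0, 1, 0]
      ![1, 1, 0] ![1, 1, 1] ![0, 1, 1] := by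
  simp only [sixTetrahedra, mem_union, or_assoc]
  rcases le_total u s with hus | hsu
  · rcases le_total (s + t) 1 with hst | hst
    · refine .inr <| .inr <| .inr <| .inr <| .inr ?_
      apply vec3_mem_convexHull_four (1 - s - t) (s - u) u t <;> linarith
    rcases le_total u (s + t - 1) with hu | hu
    · refine .inr <| .inr <| .inr <| .inr <| .inl ?_
      apply vec3_mem_convexHull_four (1 - s) (s + t - u - 1) (1 - t) u <;> linarith
    · refine .inr <| .inr <| .inr <| .inl ?_
      apply vec3_mem_convexHull_four (s - u) (s + t - 1) (u + 1 - s - t) (1 - s) <;> linarith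
  · rcases le_total 1 (s + t) with hst | hst
    · refine .inl ?_
      apply vec3_mem_convexHull_four (1 - u) (1 - t) (s + t - 1) (u - s) <;> linarith
    rcases le_total u (s + t) with hu | hu
    · refine .inr <| .inr <| .inl ?_
      apply vec3_mem_convexHull_four (1 - s - t) s (s + t - u) (u - s) <;> linarith
    · refine .inr <| .inl ?_
      apply vec3_mem_convexHull_four t (u - s - t) s (1 - u) <;> linarith

theorem unitCube_subset_sixTetrahedra :
    Icc (0 : Fin 3 → ℝ) 1 ⊆ sixTetrahedra ![0, 0, 0] ![1, 0, 0] ![1, 0, 1] ![0, 0, 1] ![0, 1, 0]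
      ![1, 1, 0] ![1, 1, 1] ![0, 1, 1] := by
  rintro x ⟨hx0, hx1⟩
  have hx : x = ![x 0, x 1, x 2] := by ext i; fin_cases i <;> rfl
  rw [hx]
  exact vec3_mem_sixTetrahedra_unitCube (hx0 0) (hx1 0) (hx0 1) (hx1 1) (hx0 2) (hx1 2)

theorem sixTetrahedra_unitCube :
    sixTetrahedra ![0, 0, 0] ![1, 0, 0] ![1, 0, 1] ![0, 0, 1] ![0, 1, 0] ![1, 1, 0]
      ![1, 1, 1] ![0, 1, 1] = Icc (0 : Fin 3 → ℝ) 1 :=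
  sixTetrahedra_subset_unitCube.antisymm unitCube_subset_sixTetrahedra

/-- The union of the six tetrahedra of the systematic subdivision equals the
brick `K = [0,a] × [0,b] × [0,c]`. -/
theorem six_tetrahedra_union_eq_brick
    (a b c : ℝ) (ha : 0 < a) (hb : 0 < b) (hc : 0 < c)
    (vE vF vB vA vH vG vC vD : Fin 3 → ℝ)
    (hE : vE = ![0, 0, 0]) (hF : vF = ![a, 0, 0]) (hB : vB = ![a, 0, c])
    (hA : vA = ![0, 0, c]) (hH : vH = ![0, b, 0]) (hG : vG = ![a, b, 0])
    (hC : vC = ![a, b, c]) (hD : vD = ![0, b, c]) :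
    convexHull ℝ {vH, vB, vC, vD} ∪ convexHull ℝ {vD, vA, vB, vE} ∪
    convexHull ℝ {vE, vB, vH, vD} ∪ convexHull ℝ {vF, vC, vB, vH} ∪
    convexHull ℝ {vH, vG, vF, vC} ∪ convexHull ℝ {vE, vF, vB, vH} =
      Set.Icc (0 : Fin 3 → ℝ) ![a, b, c] := by
  subst hE hF hB hA hH hG hC hD
  have habc : 0 ≤ ![a, b, c] := by simp [Pi.le_def, Fin.forall_fin_succ, ha.le, hb.le, hc.le]
  have h := (LinearMap.mulLeft ℝ ![a, b, c]).image_sixTetrahedra ![0, 0, 0] ![1, 0, 0]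
    ![1, 0, 1] ![0, 0, 1] ![0, 1, 0] ![1, 1, 0] ![1, 1, 1] ![0, 1, 1]
  rw [sixTetrahedra_unitCube] at h
  simp only [LinearMap.mulLeft_apply, Matrix.vec3_mul, mul_zero, mul_one] at h
  rw [← Pi.image_mul_left_Icc_zero_one habc]
  exact h.symm
end

section
/- Define the two prisms P₁ = {(x,y,z) ∈ K : a·z ≥ c·x} and P₂ = {(x,y,z) ∈ K : a·z ≤ c·x}, obtained by cutting K along the vertical plane through the diagonals EB and HC. Then T_I ∪ T_II ∪ T_III = P₁, T_IV ∪ T_V ∪ T_VI = P₂, and each of the two prisms has volume abc/2. -/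
/-!
The point reflection `p ↦ (a, b, c) - p` of the brick preserves volume and the brick, and
exchanges the two prisms, since it negates the linear form `a z - c x` cutting them apart.
The prisms therefore have equal volume, and they overlap only in a plane, so each has
half the volume `abc` of the brick. The reflection also maps `T_I, T_II, T_III` onto
`T_VI, T_V, T_IV`, so it suffices to triangulate `P₁`: in the normalised coordinates
`(u, v, t) = (x/a, y/b, z/c)`, with `u ≤ t` on `P₁`, the point lies in `T_II` when
`u + v ≤ t`, in `T_III` when `t ≤ u + v ≤ 1`, and in `T_I` when `1 ≤ u + v`.
-/

open MeasureTheory Set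

theorem smul_add_smul_add_smul_add_smul_mem_convexHull {E : Type*} [AddCommGroup E]
    [Module ℝ E] (x₀ x₁ x₂ x₃ : E) {t₀ t₁ t₂ t₃ : ℝ} (h₀ : 0 ≤ t₀) (h₁ : 0 ≤ t₁) (h₂ : 0 ≤ t₂)
    (h₃ : 0 ≤ t₃) (hsum : t₀ + t₁ + t₂ + t₃ = 1) :
    t₀ • x₀ + t₁ • x₁ + t₂ • x₂ + t₃ • x₃ ∈ convexHull ℝ {x₀, x₁, x₂, x₃} := by
  have h := (convex_convexHull ℝ ({x₀, x₁, x₂, x₃} : Set E)).sum_mem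
    (t := Finset.univ) (w := ![t₀, t₁, t₂, t₃]) (z := ![x₀, x₁, x₂, x₃])
    (fun i _ => by fin_cases i <;> assumption) (by simpa [Fin.sum_univ_four] using hsum)
    (fun i _ => subset_convexHull ℝ _ (by fin_cases i <;> simp))
  simpa [Fin.sum_univ_four] using h

section PointReflection

variable {E : Type*} [NormedAddCommGroup E] [NormedSpace ℝ E]

theorem image_sub_left_convexHull (w : E) (s : Set E) :
    (w - ·) '' convexHull ℝ s = convexHull ℝ ((w - ·) '' s) :=
  (AffineMap.const ℝ E w - AffineMap.id ℝ E).image_convexHull s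

variable [MeasurableSpace E] [BorelSpace E] [FiniteDimensional ℝ E]

theorem addHaar_sep_nonneg_eq_half (μ : Measure E) [μ.IsAddHaarMeasure] {s : Set E}
    (hs : MeasurableSet s) {w : E} (hsym : ∀ p ∈ s, w - p ∈ s) {L : E →ₗ[ℝ] ℝ} (hL : L ≠ 0)
    (hLw : L w = 0) :
    μ {p ∈ s | 0 ≤ L p} = μ s / 2 := by
  have hLm : Measurable L := L.continuous_of_finiteDimensional.measurable
  have hsub_mem (p : E) : w - p ∈ s ↔ p ∈ s :=
    ⟨fun h => by simpa using hsym _ h, hsym p⟩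
  set A := {p ∈ s | 0 ≤ L p}
  set B := {p ∈ s | L p ≤ 0}
  have hB : B = (w - ·) ⁻¹' A := by
    ext p
    simp [A, B, hsub_mem, hLw]
  have hAm : MeasurableSet A := hs.inter (measurableSet_le measurable_const hLm)
  have hBm : MeasurableSet B := hs.inter (measurableSet_le hLm measurable_const)
  have hAB : μ A = μ B := by
    rw [hB, (Measure.measurePreserving_sub_left μ w).measure_preimage hAm.nullMeasurableSet]
  have hunion : A ∪ B = s := by
    ext p
    simp only [A, B, mem_union, mem_sep_iff, ← and_or_left, and_iff_left_iff_imp]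
    exact fun _ => le_total _ _
  have hinter : μ (A ∩ B) = 0 :=
    measure_mono_null (fun p hp => LinearMap.mem_ker.2 (le_antisymm hp.2.2 hp.1.2))
      (Measure.addHaar_submodule μ _ (LinearMap.ker_eq_top.not.2 hL))
  rw [ENNReal.eq_div_iff two_ne_zero ENNReal.ofNat_ne_top]
  calc 2 * μ A = μ A + μ B := by rw [two_mul, hAB]
    _ = μ (A ∪ B) + μ (A ∩ B) := (measure_union_add_inter A hBm).symm
    _ = μ s := by rw [hunion, hinter, add_zero]

end PointReflection

section Brick

variable {a b c : ℝ}

def upperPrism (a b c : ℝ) : Set (Fin 3 → ℝ) := {p ∈ Icc 0 ![a, b, c] | a * p 2 ≥ c * p 0}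

def lowerPrism (a b c : ℝ) : Set (Fin 3 → ℝ) := {p ∈ Icc 0 ![a, b, c] | a * p 2 ≤ c * p 0}

def diagonalForm (a c : ℝ) : (Fin 3 → ℝ) →ₗ[ℝ] ℝ := a • LinearMap.proj 2 - c • LinearMap.proj 0

@[simp]
theorem diagonalForm_apply (p : Fin 3 → ℝ) : diagonalForm a c p = a * p 2 - c * p 0 := rfl

theorem diagonalForm_ne_zero (ha : a ≠ 0) : diagonalForm a c ≠ 0 := fun h => by
  simpa [ha] using LinearMap.congr_fun h (Pi.single 2 1)

theorem upperPrism_eq : upperPrism a b c = {p ∈ Icc 0 ![a, b, c] | 0 ≤ diagonalForm a c p} := by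
  simp [upperPrism]

theorem lowerPrism_eq :
    lowerPrism a b c = {p ∈ Icc 0 ![a, b, c] | 0 ≤ (-diagonalForm a c) p} := by
  simp [lowerPrism]

theorem convex_upperPrism : Convex ℝ (upperPrism a b c) := by
  rw [upperPrism_eq]
  exact (convex_Icc _ _).inter (convex_halfSpace_ge (diagonalForm a c).isLinear 0)

theorem volume_Icc_brick (ha : 0 ≤ a) (hb : 0 ≤ b) :
    volume (Icc 0 ![a, b, c]) = ENNReal.ofReal (a * b * c) := by
  simp [Real.volume_Icc_pi, Fin.prod_univ_three, ENNReal.ofReal_mul, ha, mul_nonneg ha hb]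

theorem volume_sep_nonneg_brick (ha : 0 ≤ a) (hb : 0 ≤ b) {L : (Fin 3 → ℝ) →ₗ[ℝ] ℝ}
    (hL : L ≠ 0) (hLw : L ![a, b, c] = 0) :
    volume {p ∈ Icc 0 ![a, b, c] | 0 ≤ L p} = ENNReal.ofReal (a * b * c / 2) := by
  rw [addHaar_sep_nonneg_eq_half volume measurableSet_Icc
    (fun p hp => sub_mem_Icc_zero_iff_right.2 hp) hL hLw, volume_Icc_brick ha hb,
    ENNReal.ofReal_div_of_pos two_pos, ENNReal.ofReal_ofNat]

theorem volume_upperPrism (ha : 0 < a) (hb : 0 ≤ b) :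
    volume (upperPrism a b c) = ENNReal.ofReal (a * b * c / 2) := by
  rw [upperPrism_eq]
  exact volume_sep_nonneg_brick ha.le hb (diagonalForm_ne_zero ha.ne') (by simp [mul_comm])

theorem volume_lowerPrism (ha : 0 < a) (hb : 0 ≤ b) :
    volume (lowerPrism a b c) = ENNReal.ofReal (a * b * c / 2) := by
  rw [lowerPrism_eq]
  exact volume_sep_nonneg_brick ha.le hb (neg_ne_zero.2 (diagonalForm_ne_zero ha.ne'))
    (by simp [mul_comm])

def upperTetrahedra (a b c : ℝ) : Set (Fin 3 → ℝ) :=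
  convexHull ℝ {![0, b, 0], ![a, 0, c], ![a, b, c], ![0, b, c]} ∪
    convexHull ℝ {![0, b, c], ![0, 0, c], ![a, 0, c], ![0, 0, 0]} ∪
    convexHull ℝ {![0, 0, 0], ![a, 0, c], ![0, b, 0], ![0, b, c]}

def lowerTetrahedra (a b c : ℝ) : Set (Fin 3 → ℝ) :=
  convexHull ℝ {![a, 0, 0], ![a, b, c], ![a, 0, c], ![0, b, 0]} ∪
    convexHull ℝ {![0, b, 0], ![a, b, 0], ![a, 0, 0], ![a, b, c]} ∪
    convexHull ℝ {![0, 0, 0], ![a, 0, 0], ![a, 0, c], ![0, b, 0]}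

theorem scaled_mem_upperTetrahedra {u v t : ℝ} (hu : 0 ≤ u) (hut : u ≤ t) (ht : t ≤ 1)
    (hv : 0 ≤ v) (hv' : v ≤ 1) : ![a * u, b * v, c * t] ∈ upperTetrahedra a b c := by
  rcases le_total (u + v) t with huvt | htuv
  · refine mem_union_left _ (mem_union_right _ ?_)
    convert smul_add_smul_add_smul_add_smul_mem_convexHull _ _ _ _ hv (by linarith : 0 ≤ t - u - v)
      hu (by linarith : 0 ≤ 1 - t) (by ring) using 1
    ext i; fin_cases i <;> simp <;> ring
  rcases le_total (u + v) 1 with huv | huv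
  · refine mem_union_right _ ?_
    convert smul_add_smul_add_smul_add_smul_mem_convexHull _ _ _ _
      (by linarith : 0 ≤ 1 - u - v) hu (by linarith : 0 ≤ u + v - t) (by linarith : 0 ≤ t - u)
      (by ring) using 1
    ext i; fin_cases i <;> simp <;> ring
  · refine mem_union_left _ (mem_union_left _ ?_)
    convert smul_add_smul_add_smul_add_smul_mem_convexHull _ _ _ _
      (by linarith : 0 ≤ 1 - t) (by linarith : 0 ≤ 1 - v) (by linarith : 0 ≤ u + v - 1)
      (by linarith : 0 ≤ t - u) (by ring) using 1
    ext i; fin_cases i <;> simp <;> ring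

theorem upperTetrahedra_eq_upperPrism (ha : 0 < a) (hb : 0 < b) (hc : 0 < c) :
    upperTetrahedra a b c = upperPrism a b c := by
  refine Subset.antisymm ?_ fun p ⟨⟨hp₀, hpw⟩, hpc⟩ => ?_
  · refine union_subset (union_subset ?_ ?_) ?_ <;> refine convexHull_min ?_ convex_upperPrism <;>
      simp [upperPrism, insert_subset_iff, Pi.le_def, Fin.forall_fin_succ, ha.le, hb.le, hc.le,
        mul_comm, mul_nonneg ha.le hc.le]
  have hp : p = ![a * (p 0 / a), b * (p 1 / b), c * (p 2 / c)] := by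
    ext i; fin_cases i <;> simp [mul_div_cancel₀, ha.ne', hb.ne', hc.ne']
  have hp₀ (i : Fin 3) : 0 ≤ p i := hp₀ i
  have hpw (i : Fin 3) : p i ≤ ![a, b, c] i := hpw i
  rw [hp]
  refine scaled_mem_upperTetrahedra (div_nonneg (hp₀ 0) ha.le) ?_ ((div_le_one hc).2 (hpw 2))
    (div_nonneg (hp₀ 1) hb.le) ((div_le_one hb).2 (hpw 1))
  rw [div_le_div_iff₀ ha hc]
  linarith

theorem image_sub_upperPrism : (![a, b, c] - ·) '' upperPrism a b c = lowerPrism a b c := by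
  rw [Function.Involutive.image_eq_preimage_symm (sub_sub_cancel ![a, b, c])]
  ext p
  simp only [upperPrism, lowerPrism, mem_preimage, mem_sep_iff, sub_mem_Icc_zero_iff_right]
  refine and_congr_right fun _ => ?_
  simp only [Pi.sub_apply, Matrix.cons_val]
  constructor <;> intro <;> linarith

theorem lowerTetrahedra_eq_lowerPrism (ha : 0 < a) (hb : 0 < b) (hc : 0 < c) :
    lowerTetrahedra a b c = lowerPrism a b c := by
  rw [← image_sub_upperPrism, ← upperTetrahedra_eq_upperPrism ha hb hc]
  simp only [upperTetrahedra, lowerTetrahedra, image_union, image_sub_left_convexHull,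
    image_insert_eq, image_singleton, Matrix.cons_sub_cons, Matrix.empty_sub_empty]
  simp only [sub_zero, sub_self]
  rw [union_comm, union_comm (convexHull ℝ _) (convexHull ℝ _), ← union_assoc]
  refine congrArg₂ (· ∪ ·) (congrArg₂ (· ∪ ·) ?_ ?_) ?_ <;> congr 1 <;> ext <;>
    simp only [mem_insert_iff, mem_singleton_iff] <;> tauto

end Brick

/-- Cutting the brick `K` along the vertical diagonal plane `a·z = c·x` gives
two prisms `P₁`, `P₂`; the first three tetrahedra of the subdivision fill `P₁`,
the last three fill `P₂`, and each prism has volume `a*b*c/2`. -/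
theorem three_tetrahedra_fill_each_prism
    (a b c : ℝ) (ha : 0 < a) (hb : 0 < b) (hc : 0 < c)
    (vE vF vB vA vH vG vC vD : Fin 3 → ℝ)
    (hE : vE = ![0, 0, 0]) (hF : vF = ![a, 0, 0]) (hB : vB = ![a, 0, c])
    (hA : vA = ![0, 0, c]) (hH : vH = ![0, b, 0]) (hG : vG = ![a, b, 0])
    (hC : vC = ![a, b, c]) (hD : vD = ![0, b, c])
    (K P₁ P₂ : Set (Fin 3 → ℝ))
    (hK : K = Set.Icc (0 : Fin 3 → ℝ) ![a, b, c])
    (hP₁ : P₁ = {p ∈ K | a * p 2 ≥ c * p 0})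
    (hP₂ : P₂ = {p ∈ K | a * p 2 ≤ c * p 0}) :
    convexHull ℝ {vH, vB, vC, vD} ∪ convexHull ℝ {vD, vA, vB, vE} ∪
        convexHull ℝ {vE, vB, vH, vD} = P₁ ∧
    convexHull ℝ {vF, vC, vB, vH} ∪ convexHull ℝ {vH, vG, vF, vC} ∪
        convexHull ℝ {vE, vF, vB, vH} = P₂ ∧
    volume P₁ = ENNReal.ofReal (a * b * c / 2) ∧
    volume P₂ = ENNReal.ofReal (a * b * c / 2) := by
  subst hE hF hB hA hH hG hC hD hK hP₁ hP₂
  exact ⟨upperTetrahedra_eq_upperPrism ha hb hc, lowerTetrahedra_eq_lowerPrism ha hb hc,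
    volume_upperPrism ha hb.le, volume_lowerPrism ha hb.le⟩
end

section
/- Let σ : ℝ³ → ℝ³ be the linear map σ(x,y,z) = ((a/c)·z, y, (c/a)·x). Then σ is an involution (σ ∘ σ = id) with determinant of absolute value 1 (hence volume-preserving), it maps the brick K onto itself and the prism P₁ = {(x,y,z) ∈ K : a·z ≥ c·x} onto the prism P₂ = {(x,y,z) ∈ K : a·z ≤ c·x}, and the images σ(T_I) = conv{H,B,C,G}, σ(T_II) = conv{G,F,B,E}, σ(T_III) = conv{E,B,H,G} are three tetrahedra with pairwise disjoint interiors whose union is P₂. (Thus the three tetrahedra on one prism are reflections, about the vertical diagonal plane a·z = c·x, of three tetrahedra subdividing the other prism.) -/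
/-!
In the normalized coordinates `x = p₀/a, y = p₁/b, z = p₂/c`, the map `σ` just swaps `x` and `z`,
so it is a linear involution preserving `K` and exchanging the half-spaces `z ≥ x` and `z ≤ x`;
being linear, it maps each tetrahedron onto the convex hull of the images of its vertices.

A point of `P₂` lies in `conv{H,B,C,G}` when `y + z ≥ 1`, in `conv{G,F,B,E}` when `y + z ≤ x`,
and in `conv{E,B,H,G}` otherwise: in each case its barycentric coordinates are read off directly
from `x, y, z`. The planes `y + z = 1` and `x = y + z` separate the three tetrahedra, and two sets
lying on opposite sides of a hyperplane have disjoint interiors.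
-/

open MeasureTheory Set Matrix

theorem measurePreserving_mulVec_of_abs_det_eq_one {ι : Type*} [Fintype ι] [DecidableEq ι]
    {M : Matrix ι ι ℝ} (hM : |M.det| = 1) : MeasurePreserving M.mulVec volume volume := by
  have hM0 : M.det ≠ 0 := fun h => by simp [h] at hM
  refine ⟨(toLin' M).continuous_on_pi.measurable, ?_⟩
  simpa [hM, toLin'_apply', coe_mulVecLin] using Real.map_matrix_volume_pi_eq_smul_volume_pi hM0

theorem mem_convexHull_four_s4 {E : Type*} [AddCommGroup E] [Module ℝ E] {v₁ v₂ v₃ v₄ p : E}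
    {w₁ w₂ w₃ w₄ : ℝ} (h₁ : 0 ≤ w₁) (h₂ : 0 ≤ w₂) (h₃ : 0 ≤ w₃) (h₄ : 0 ≤ w₄)
    (hw : w₁ + w₂ + w₃ + w₄ = 1) (hp : w₁ • v₁ + w₂ • v₂ + w₃ • v₃ + w₄ • v₄ = p) :
    p ∈ convexHull ℝ {v₁, v₂, v₃, v₄} := by
  have := (convex_convexHull ℝ {v₁, v₂, v₃, v₄}).sum_mem (t := Finset.univ)
    (w := ![w₁, w₂, w₃, w₄]) (z := ![v₁, v₂, v₃, v₄])
    (by simp [Fin.forall_fin_succ, *]) (by simp [Fin.sum_univ_four, hw])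
    (by simp [Fin.forall_fin_succ, subset_convexHull ℝ _ _])
  simpa [Fin.sum_univ_four, hp] using this

theorem interior_inter_interior_eq_empty_of_separated {E : Type*} [NormedAddCommGroup E]
    [NormedSpace ℝ E] [FiniteDimensional ℝ E] {s t : Set E} {f : E →ₗ[ℝ] ℝ} (hf : f ≠ 0)
    {r : ℝ} (hs : ∀ p ∈ s, f p ≤ r) (ht : ∀ p ∈ t, r ≤ f p) :
    interior s ∩ interior t = ∅ := by
  have hopen := f.isOpenMap_of_finiteDimensional (f.surjective_of_ne_zero hf)
  have hsub : f '' (interior s ∩ interior t) ⊆ {r} := by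
    rintro _ ⟨p, ⟨hps, hpt⟩, rfl⟩
    exact le_antisymm (hs p (interior_subset hps)) (ht p (interior_subset hpt))
  have := interior_maximal hsub (hopen _ (isOpen_interior.inter isOpen_interior))
  rwa [interior_singleton, subset_empty_iff, image_eq_empty] at this

theorem interior_convexHull_inter_interior_convexHull_eq_empty {E : Type*}
    [NormedAddCommGroup E] [NormedSpace ℝ E] [FiniteDimensional ℝ E] {s t : Set E}
    {f : E →ₗ[ℝ] ℝ} (hf : f ≠ 0) {r : ℝ} (hs : ∀ v ∈ s, f v ≤ r) (ht : ∀ v ∈ t, r ≤ f v) :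
    interior (convexHull ℝ s) ∩ interior (convexHull ℝ t) = ∅ :=
  interior_inter_interior_eq_empty_of_separated hf
    (convexHull_min hs (convex_halfSpace_le f.isLinear r))
    (convexHull_min ht (convex_halfSpace_ge f.isLinear r))

theorem dotProductBilin_ne_zero {ι : Type*} [Fintype ι] {u : ι → ℝ} (hu : u ≠ 0) :
    dotProductBilin ℝ ℝ u ≠ 0 := fun h =>
  hu (by simpa using LinearMap.congr_fun h u)

noncomputable def diagonalReflection (a c : ℝ) : Matrix (Fin 3) (Fin 3) ℝ :=
  !![0, 0, a / c; 0, 1, 0; c / a, 0, 0]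

/-- The images `conv{H,B,C,G}`, `conv{G,F,B,E}`, `conv{E,B,H,G}` of `T_I`, `T_II`, `T_III`. -/
def prismTetrahedra (a b c : ℝ) : Fin 3 → Set (Fin 3 → ℝ) :=
  ![convexHull ℝ {![0, b, 0], ![a, 0, c], ![a, b, c], ![a, b, 0]},
    convexHull ℝ {![a, b, 0], ![a, 0, 0], ![a, 0, c], ![0, 0, 0]},
    convexHull ℝ {![0, 0, 0], ![a, 0, c], ![0, b, 0], ![a, b, 0]}]

section

variable {a b c : ℝ}

theorem diagonalReflection_mulVec (p : Fin 3 → ℝ) :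
    diagonalReflection a c *ᵥ p = ![a / c * p 2, p 1, c / a * p 0] := by
  ext i; fin_cases i <;> simp [diagonalReflection, mulVec, dotProduct, Fin.sum_univ_three]

theorem det_diagonalReflection (ha : 0 < a) (hc : 0 < c) :
    (diagonalReflection a c).det = -1 := by
  simp [diagonalReflection, det_fin_three, ha.ne', hc.ne']

theorem diagonalReflection_mul_self (ha : 0 < a) (hc : 0 < c) :
    diagonalReflection a c * diagonalReflection a c = 1 := by
  ext i j
  fin_cases i <;> fin_cases j <;>
    simp [diagonalReflection, Matrix.mul_apply, Fin.sum_univ_three, ha.ne', hc.ne']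

theorem diagonalReflection_involutive (ha : 0 < a) (hc : 0 < c) :
    Function.Involutive (diagonalReflection a c).mulVec := fun p => by
  rw [mulVec_mulVec, diagonalReflection_mul_self ha hc, one_mulVec]

theorem mem_brick_iff (ha : 0 < a) (hb : 0 < b) (hc : 0 < c) {p : Fin 3 → ℝ} :
    p ∈ Icc (0 : Fin 3 → ℝ) ![a, b, c] ↔
      p 0 / a ∈ Icc (0 : ℝ) 1 ∧ p 1 / b ∈ Icc (0 : ℝ) 1 ∧ p 2 / c ∈ Icc (0 : ℝ) 1 := by
  simp only [mem_Icc, Pi.le_def, Fin.forall_fin_succ, IsEmpty.forall_iff, and_true, Pi.zero_apply,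
    Fin.succ_zero_eq_one, Fin.succ_one_eq_two, cons_val_zero, cons_val_one, cons_val_two,
    le_div_iff₀, div_le_one, zero_mul, ha, hb, hc]
  tauto

theorem diagonalReflection_mulVec_mem_brick_iff (ha : 0 < a) (hb : 0 < b) (hc : 0 < c)
    {p : Fin 3 → ℝ} :
    diagonalReflection a c *ᵥ p ∈ Icc (0 : Fin 3 → ℝ) ![a, b, c] ↔
      p ∈ Icc (0 : Fin 3 → ℝ) ![a, b, c] := by
  have hx : a / c * p 2 / a = p 2 / c := by field_simp
  have hz : c / a * p 0 / c = p 0 / a := by field_simp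
  simp only [mem_brick_iff ha hb hc, diagonalReflection_mulVec, cons_val_zero, cons_val_one,
    cons_val_two, head_cons, tail_cons, hx, hz]
  tauto

theorem image_diagonalReflection_brick (ha : 0 < a) (hb : 0 < b) (hc : 0 < c) :
    (diagonalReflection a c).mulVec '' Icc 0 ![a, b, c] = Icc 0 ![a, b, c] := by
  rw [(diagonalReflection_involutive ha hc).image_eq_preimage_symm]
  ext p
  exact diagonalReflection_mulVec_mem_brick_iff ha hb hc

theorem image_diagonalReflection_prism (ha : 0 < a) (hb : 0 < b) (hc : 0 < c) :
    (diagonalReflection a c).mulVec '' {p ∈ Icc 0 ![a, b, c] | a * p 2 ≥ c * p 0} =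
      {p ∈ Icc 0 ![a, b, c] | a * p 2 ≤ c * p 0} := by
  rw [(diagonalReflection_involutive ha hc).image_eq_preimage_symm]
  ext p
  have hx : c * (a / c * p 2) = a * p 2 := by field_simp
  have hz : a * (c / a * p 0) = c * p 0 := by field_simp
  rw [mem_preimage, mem_sep_iff, mem_sep_iff, diagonalReflection_mulVec_mem_brick_iff ha hb hc,
    diagonalReflection_mulVec]
  simp only [cons_val_zero, cons_val_two, head_cons, tail_cons, hx, hz, ge_iff_le]

theorem image_diagonalReflection_tetrahedra (ha : 0 < a) (hc : 0 < c) :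
    (diagonalReflection a c).mulVec ''
        convexHull ℝ {![0, b, 0], ![a, 0, c], ![a, b, c], ![0, b, c]} = prismTetrahedra a b c 0 ∧
      (diagonalReflection a c).mulVec ''
        convexHull ℝ {![0, b, c], ![0, 0, c], ![a, 0, c], ![0, 0, 0]} = prismTetrahedra a b c 1 ∧
      (diagonalReflection a c).mulVec ''
        convexHull ℝ {![0, 0, 0], ![a, 0, c], ![0, b, 0], ![0, b, c]} = prismTetrahedra a b c 2 := by
  simp only [← coe_mulVecLin, LinearMap.image_convexHull]
  simp [prismTetrahedra, image_insert_eq, diagonalReflection_mulVec, ha.ne', hc.ne']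

theorem convex_prism : Convex ℝ {p ∈ Icc (0 : Fin 3 → ℝ) ![a, b, c] | a * p 2 ≤ c * p 0} := by
  let f : (Fin 3 → ℝ) →ₗ[ℝ] ℝ := a • LinearMap.proj 2 - c • LinearMap.proj 0
  have hf : {p ∈ Icc (0 : Fin 3 → ℝ) ![a, b, c] | a * p 2 ≤ c * p 0} =
      Icc 0 ![a, b, c] ∩ {p | f p ≤ 0} := by
    ext p; simp [f]
  rw [hf]
  exact (convex_Icc _ _).inter (convex_halfSpace_le f.isLinear 0)

theorem prismTetrahedra_subset_prism (ha : 0 < a) (hb : 0 < b) (hc : 0 < c) (i : Fin 3) :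
    prismTetrahedra a b c i ⊆ {p ∈ Icc (0 : Fin 3 → ℝ) ![a, b, c] | a * p 2 ≤ c * p 0} := by
  fin_cases i <;> refine convexHull_min ?_ convex_prism <;>
    simp [insert_subset_iff, Pi.le_def, Fin.forall_fin_succ, ha.le, hb.le, hc.le, mul_comm,
      (mul_pos ha hc).le]

theorem prism_subset_union_prismTetrahedra (ha : 0 < a) (hb : 0 < b) (hc : 0 < c) :
    {p ∈ Icc (0 : Fin 3 → ℝ) ![a, b, c] | a * p 2 ≤ c * p 0} ⊆
      prismTetrahedra a b c 0 ∪ prismTetrahedra a b c 1 ∪ prismTetrahedra a b c 2 := by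
  rintro p ⟨hK, hpr⟩
  rw [mem_brick_iff ha hb hc] at hK
  obtain ⟨⟨hx0, hx1⟩, ⟨hy0, hy1⟩, ⟨hz0, hz1⟩⟩ := hK
  have hzx : p 2 / c ≤ p 0 / a := by rw [div_le_div_iff₀ hc ha]; linarith
  by_cases hHBCG : 1 ≤ p 1 / b + p 2 / c
  · refine Or.inl (Or.inl (mem_convexHull_four_s4 (w₁ := 1 - p 0 / a) (w₂ := 1 - p 1 / b)
      (w₃ := p 1 / b + p 2 / c - 1) (w₄ := p 0 / a - p 2 / c) ?_ ?_ ?_ ?_ ?_ ?_))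
    any_goals linarith
    ext i
    fin_cases i <;>
      simp only [Fin.zero_eta, Fin.mk_one, Fin.reduceFinMk, Pi.add_apply, Pi.smul_apply,
        cons_val_zero, cons_val_one, cons_val_two, head_cons, tail_cons, smul_eq_mul] <;>
      field_simp <;> ring
  by_cases hGFBE : p 1 / b + p 2 / c ≤ p 0 / a
  · refine Or.inl (Or.inr (mem_convexHull_four_s4 (w₁ := p 1 / b)
      (w₂ := p 0 / a - p 1 / b - p 2 / c) (w₃ := p 2 / c) (w₄ := 1 - p 0 / a) ?_ ?_ ?_ ?_ ?_ ?_))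
    any_goals linarith
    ext i
    fin_cases i <;>
      simp only [Fin.zero_eta, Fin.mk_one, Fin.reduceFinMk, Pi.add_apply, Pi.smul_apply,
        cons_val_zero, cons_val_one, cons_val_two, head_cons, tail_cons, smul_eq_mul] <;>
      field_simp <;> ring
  · refine Or.inr (mem_convexHull_four_s4 (w₁ := 1 - p 1 / b - p 2 / c) (w₂ := p 2 / c)
      (w₃ := p 1 / b + p 2 / c - p 0 / a) (w₄ := p 0 / a - p 2 / c) ?_ ?_ ?_ ?_ ?_ ?_)
    any_goals linarith
    ext i
    fin_cases i <;>
      simp only [Fin.zero_eta, Fin.mk_one, Fin.reduceFinMk, Pi.add_apply, Pi.smul_apply,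
        cons_val_zero, cons_val_one, cons_val_two, head_cons, tail_cons, smul_eq_mul] <;>
      field_simp <;> ring

theorem union_prismTetrahedra (ha : 0 < a) (hb : 0 < b) (hc : 0 < c) :
    prismTetrahedra a b c 0 ∪ prismTetrahedra a b c 1 ∪ prismTetrahedra a b c 2 =
      {p ∈ Icc (0 : Fin 3 → ℝ) ![a, b, c] | a * p 2 ≤ c * p 0} :=
  (union_subset (union_subset (prismTetrahedra_subset_prism ha hb hc 0)
    (prismTetrahedra_subset_prism ha hb hc 1)) (prismTetrahedra_subset_prism ha hb hc 2)).antisymm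
    (prism_subset_union_prismTetrahedra ha hb hc)

theorem interior_prismTetrahedra_inter_eq_empty (ha : 0 < a) (hb : 0 < b) (hc : 0 < c)
    {i j : Fin 3} (hij : i ≠ j) :
    interior (prismTetrahedra a b c i) ∩ interior (prismTetrahedra a b c j) = ∅ := by
  have hbc : 0 < b * c := mul_pos hb hc
  have habc : 0 ≤ a * (b * c) := by positivity
  have hyz := dotProductBilin_ne_zero (u := ![0, c, b]) (by simp [hc.ne'])
  have hxyz := dotProductBilin_ne_zero (u := ![b * c, -(a * c), -(a * b)]) (by simp [hbc.ne'])
  have h10 : interior (prismTetrahedra a b c 1) ∩ interior (prismTetrahedra a b c 0) = ∅ :=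
    interior_convexHull_inter_interior_convexHull_eq_empty hyz (r := b * c)
      (by simp [dotProduct, Fin.sum_univ_three, mul_comm, hbc.le])
      (by simp [dotProduct, Fin.sum_univ_three, mul_comm, hbc.le])
  have h20 : interior (prismTetrahedra a b c 2) ∩ interior (prismTetrahedra a b c 0) = ∅ :=
    interior_convexHull_inter_interior_convexHull_eq_empty hyz (r := b * c)
      (by simp [dotProduct, Fin.sum_univ_three, mul_comm, hbc.le])
      (by simp [dotProduct, Fin.sum_univ_three, mul_comm, hbc.le])
  have h21 : interior (prismTetrahedra a b c 2) ∩ interior (prismTetrahedra a b c 1) = ∅ :=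
    interior_convexHull_inter_interior_convexHull_eq_empty hxyz (r := 0)
      (by simp [dotProduct, Fin.sum_univ_three, mul_comm, mul_left_comm, habc])
      (by simp [dotProduct, Fin.sum_univ_three, mul_comm, mul_left_comm, habc])
  fin_cases i <;> fin_cases j
  all_goals first
    | exact absurd rfl hij
    | assumption
    | exact (inter_comm _ _).trans ‹_›

end

/-- The reflection `σ(x,y,z) = ((a/c)z, y, (c/a)x)` about the vertical diagonal
plane `a·z = c·x` is a volume-preserving involution of the brick `K` exchanging
the two prisms `P₁`, `P₂`, and it carries the three tetrahedra subdividing `P₁`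
onto three tetrahedra with pairwise disjoint interiors whose union is `P₂`. -/
theorem reflection_carries_prism_subdivision
    (a b c : ℝ) (ha : 0 < a) (hb : 0 < b) (hc : 0 < c)
    (vE vF vB vA vH vG vC vD : Fin 3 → ℝ)
    (hE : vE = ![0, 0, 0]) (hF : vF = ![a, 0, 0]) (hB : vB = ![a, 0, c])
    (hA : vA = ![0, 0, c]) (hH : vH = ![0, b, 0]) (hG : vG = ![a, b, 0])
    (hC : vC = ![a, b, c]) (hD : vD = ![0, b, c])
    (K P₁ P₂ : Set (Fin 3 → ℝ))
    (hK : K = Set.Icc (0 : Fin 3 → ℝ) ![a, b, c])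
    (hP₁ : P₁ = {p ∈ K | a * p 2 ≥ c * p 0})
    (hP₂ : P₂ = {p ∈ K | a * p 2 ≤ c * p 0})
    (σ : (Fin 3 → ℝ) → (Fin 3 → ℝ))
    (hσ : ∀ p, σ p = ![(a / c) * p 2, p 1, (c / a) * p 0])
    (S : Fin 3 → Set (Fin 3 → ℝ))
    (hS : S = ![convexHull ℝ {vH, vB, vC, vG}, convexHull ℝ {vG, vF, vB, vE},
                convexHull ℝ {vE, vB, vH, vG}]) :
    IsLinearMap ℝ σ ∧
    (∀ p, σ (σ p) = p) ∧
    |Matrix.det !![0, 0, a / c; 0, 1, 0; c / a, 0, 0]| = 1 ∧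
    MeasurePreserving σ volume volume ∧
    σ '' K = K ∧
    σ '' P₁ = P₂ ∧
    σ '' (convexHull ℝ {vH, vB, vC, vD}) = S 0 ∧
    σ '' (convexHull ℝ {vD, vA, vB, vE}) = S 1 ∧
    σ '' (convexHull ℝ {vE, vB, vH, vD}) = S 2 ∧
    (∀ i j : Fin 3, i ≠ j → interior (S i) ∩ interior (S j) = ∅) ∧
    S 0 ∪ S 1 ∪ S 2 = P₂ := by
  subst hE hF hB hA hH hG hC hD hK hP₁ hP₂
  obtain rfl : S = prismTetrahedra a b c := hS
  obtain rfl : σ = (diagonalReflection a c).mulVec :=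
    funext fun p => (hσ p).trans (diagonalReflection_mulVec p).symm
  have hdet : |(diagonalReflection a c).det| = 1 := by
    rw [det_diagonalReflection ha hc, abs_neg, abs_one]
  obtain ⟨hI, hII, hIII⟩ := image_diagonalReflection_tetrahedra (b := b) ha hc
  exact ⟨(mulVecLin _).isLinear, diagonalReflection_involutive ha hc, hdet,
    measurePreserving_mulVec_of_abs_det_eq_one hdet, image_diagonalReflection_brick ha hb hc,
    image_diagonalReflection_prism ha hb hc, hI, hII, hIII,
    fun _ _ => interior_prismTetrahedra_inter_eq_empty ha hb hc, union_prismTetrahedra ha hb hc⟩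
end
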